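/- Let f satisfy (H1) with F(r)=∫₀^r f(s) ds < 0 for 0 < r ≤ 1. Let c > 0 and v be a C² solution of v'' + c v' + f(v) = 0 on ℝ with 0 ≤ v ≤ 1, v → 0 at -∞, v → 1 at +∞. If ξ ∈ ℝ satisfies v'(ξ) = 0, then v(ξ) = 0 or v(ξ) = 1. -/

import Mathlib

/-!
Along the wave the energy `E = v'² / 2 + F(v)` satisfies `E' = -c v'² ≤ 0` and stays above its
limit `F(1)`; it can reach `F(1)` only if `v` is eventually constant. Hence `F(1) < F(a)` at a
critical point `ξ` with `a = v ξ ∈ (0, 1)`. As `F` increases on `[s₀, 1]`, this forces `a < s₀`,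
so `v''(ξ) = -f(a) > 0` and `v` rises above `a` just left of `ξ`. Since `v → 0` at `-∞`, `v` has a
local maximum `η < ξ` with `b = v η ∈ (a, 1]`. Monotonicity of the energy gives `F(a) ≤ F(b)`, while
`F` decreasing on `[0, s₀]` and increasing on `[s₀, 1]` gives `F(b) < F(a)`.
-/

open Filter Set Topology

section Primitive

variable {f : ℝ → ℝ} {x₀ a b : ℝ}

theorem strictMonoOn_integral_of_pos (hf : Continuous f) (h : ∀ x ∈ Ioo a b, 0 < f x) :
    StrictMonoOn (fun r => ∫ s in x₀..r, f s) (Icc a b) := by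
  refine strictMonoOn_of_deriv_pos (convex_Icc a b)
    (intervalIntegral.continuous_primitive (hf.intervalIntegrable ·) x₀).continuousOn
    fun x hx => ?_
  rw [hf.deriv_integral]
  exact h x (by rwa [interior_Icc] at hx)

theorem strictAntiOn_integral_of_neg (hf : Continuous f) (h : ∀ x ∈ Ioo a b, f x < 0) :
    StrictAntiOn (fun r => ∫ s in x₀..r, f s) (Icc a b) := by
  refine strictAntiOn_of_deriv_neg (convex_Icc a b)
    (intervalIntegral.continuous_primitive (hf.intervalIntegrable ·) x₀).continuousOn
    fun x hx => ?_
  rw [hf.deriv_integral]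
  exact h x (by rwa [interior_Icc] at hx)

end Primitive

section Extremum

variable {g : ℝ → ℝ} {ξ : ℝ}

theorem exists_lt_apply_of_deriv_deriv_pos (hg : Differentiable ℝ g) (hd : deriv g ξ = 0)
    (hdd : 0 < deriv (deriv g) ξ) : ∃ z < ξ, g ξ < g z := by
  have hneg : ∀ᶠ x in 𝓝[<] ξ, deriv g x < 0 := deriv_neg_left_of_sign_deriv <|
    nhdsWithin_le_nhds (eventually_nhdsWithin_sign_eq_of_deriv_pos hdd hd)
  obtain ⟨l, hlξ, hl⟩ := (nhdsLT_basis ξ).eventually_iff.mp hneg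
  have hanti : StrictAntiOn g (Icc ((l + ξ) / 2) ξ) := by
    refine strictAntiOn_of_deriv_neg (convex_Icc _ _) hg.continuous.continuousOn fun x hx => ?_
    rw [interior_Icc] at hx
    exact hl ⟨by linarith [hx.1], hx.2⟩
  exact ⟨(l + ξ) / 2, by linarith,
    hanti (left_mem_Icc.2 (by linarith)) (right_mem_Icc.2 (by linarith)) (by linarith)⟩

theorem exists_isLocalMax_of_tendsto_atBot {m z : ℝ} (hg : Continuous g)
    (hbot : Tendsto g atBot (𝓝 m)) (hzξ : z < ξ) (hm : m < g z) (hξ : g ξ < g z) :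
    ∃ η < ξ, IsLocalMax g η ∧ g z ≤ g η := by
  have hfar : ∀ᶠ x in cocompact ℝ ⊓ 𝓟 (Iic ξ), g x ≤ g z := by
    rw [cocompact_eq_atBot_atTop, inf_sup_right, eventually_sup, eventually_inf_principal,
      eventually_inf_principal]
    constructor
    · filter_upwards [hbot.eventually (eventually_le_nhds hm)] with x hx _ using hx
    · filter_upwards [eventually_gt_atTop ξ] with x hx hxξ using absurd hxξ (not_le.2 hx)
  obtain ⟨η, hηξ, hmax⟩ :=
    hg.continuousOn.exists_isMaxOn' isClosed_Iic (mem_Iic.2 hzξ.le) hfar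
  have hzη : g z ≤ g η := hmax (mem_Iic.2 hzξ.le)
  have hηξ' : η < ξ := lt_of_le_of_ne hηξ fun h => (h ▸ hξ).not_ge hzη
  exact ⟨η, hηξ', hmax.isLocalMax (Iic_mem_nhds hηξ'), hzη⟩

end Extremum

section Energy

variable {f v : ℝ → ℝ} {c L z : ℝ}

noncomputable def waveEnergy (f v : ℝ → ℝ) (z : ℝ) : ℝ :=
  deriv v z ^ 2 / 2 + ∫ s in (0 : ℝ)..v z, f s

theorem waveEnergy_of_deriv_eq_zero (h : deriv v z = 0) :
    waveEnergy f v z = ∫ s in (0 : ℝ)..v z, f s := by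
  simp [waveEnergy, h]

theorem hasDerivAt_waveEnergy (hf : Continuous f) (hv : ContDiff ℝ 2 v)
    (hode : ∀ z, deriv (deriv v) z + c * deriv v z + f (v z) = 0) (z : ℝ) :
    HasDerivAt (waveEnergy f v) (-(c * deriv v z ^ 2)) z := by
  have hv' : Differentiable ℝ (deriv v) :=
    (ContDiff.deriv' (n := 1) hv).differentiable one_ne_zero
  have hkin := ((hv' z).hasDerivAt.pow 2).div_const 2
  have hpot := (hf.integral_hasStrictDerivAt 0 (v z)).hasDerivAt.comp z
    ((hv.differentiable two_ne_zero) z).hasDerivAt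
  exact (hkin.add hpot).congr_deriv (by linear_combination deriv v z * hode z)

theorem antitone_waveEnergy (hf : Continuous f) (hv : ContDiff ℝ 2 v)
    (hode : ∀ z, deriv (deriv v) z + c * deriv v z + f (v z) = 0) (hc : 0 ≤ c) :
    Antitone (waveEnergy f v) := by
  have hE := hasDerivAt_waveEnergy hf hv hode
  refine antitone_of_deriv_nonpos (fun z => (hE z).differentiableAt) fun z => ?_
  rw [(hE z).deriv]
  have := mul_nonneg hc (sq_nonneg (deriv v z))
  linarith

theorem integral_le_waveEnergy (hf : Continuous f) (hE : Antitone (waveEnergy f v))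
    (htop : Tendsto v atTop (𝓝 L)) (z : ℝ) : ∫ s in (0 : ℝ)..L, f s ≤ waveEnergy f v z := by
  have hpot : Tendsto (fun y => ∫ s in (0 : ℝ)..v y, f s) atTop (𝓝 (∫ s in (0 : ℝ)..L, f s)) :=
    ((intervalIntegral.continuous_primitive (hf.intervalIntegrable ·) 0).tendsto L).comp htop
  refine le_of_tendsto hpot ?_
  filter_upwards [eventually_ge_atTop z] with y hy
  calc ∫ s in (0 : ℝ)..v y, f s ≤ waveEnergy f v y := le_add_of_nonneg_left (by positivity)
    _ ≤ waveEnergy f v z := hE hy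

theorem integral_lt_waveEnergy (hf : Continuous f) (hv : ContDiff ℝ 2 v)
    (hode : ∀ z, deriv (deriv v) z + c * deriv v z + f (v z) = 0) (hc : 0 < c)
    (htop : Tendsto v atTop (𝓝 L)) (hz : v z ≠ L) :
    ∫ s in (0 : ℝ)..L, f s < waveEnergy f v z := by
  have hE := hasDerivAt_waveEnergy hf hv hode
  have hanti := antitone_waveEnergy hf hv hode hc.le
  refine (integral_le_waveEnergy hf hanti htop z).lt_of_ne fun heq => hz ?_
  have hcrit : ∀ y > z, deriv v y = 0 := by
    intro y hy
    have hconst : waveEnergy f v =ᶠ[𝓝 y] fun _ => ∫ s in (0 : ℝ)..L, f s := by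
      filter_upwards [Ioi_mem_nhds hy] with x hx
      exact le_antisymm (heq ▸ hanti hx.le) (integral_le_waveEnergy hf hanti htop x)
    have h0 := (hE y).unique ((hasDerivAt_const y _).congr_of_eventuallyEq hconst)
    simpa [hc.ne'] using h0
  have hvd : Differentiable ℝ v := hv.differentiable two_ne_zero
  have hflat : ∀ y > z, v y = v z := by
    intro y hy
    obtain ⟨x, hx, hslope⟩ :=
      exists_deriv_eq_slope v hy hvd.continuous.continuousOn hvd.differentiableOn
    rw [hcrit x hx.1, eq_comm, div_eq_zero_iff, sub_eq_zero] at hslope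
    exact hslope.resolve_right (sub_ne_zero.2 hy.ne')
  refine tendsto_nhds_unique (tendsto_const_nhds.congr' ?_) htop
  filter_upwards [eventually_gt_atTop z] with y hy using (hflat y hy).symm

end Energy

theorem stmt_17_general (f : ℝ → ℝ) (s₀ c : ℝ) (v : ℝ → ℝ) (ξ : ℝ)
    (hf : Continuous f)
    (hneg : ∀ s, (s ∈ Ioo 0 s₀ ∨ s ∈ Ioi 1) → f s < 0)
    (hpos : ∀ s, (s ∈ Iio 0 ∨ s ∈ Ioo s₀ 1) → 0 < f s)
    (hc : 0 < c)
    (hv : ContDiff ℝ 2 v)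
    (hode : ∀ z, deriv (deriv v) z + c * deriv v z + f (v z) = 0)
    (h01 : ∀ z, 0 ≤ v z ∧ v z ≤ 1)
    (hbot : Tendsto v atBot (nhds 0)) (htop : Tendsto v atTop (nhds 1))
    (hξ : deriv v ξ = 0) :
    v ξ = 0 ∨ v ξ = 1 := by
  by_contra! ha
  have ha0 : 0 < v ξ := (h01 ξ).1.lt_of_ne' ha.1
  have ha1 : v ξ < 1 := (h01 ξ).2.lt_of_ne ha.2
  have hFmono : StrictMonoOn (fun r => ∫ s in (0 : ℝ)..r, f s) (Icc s₀ 1) :=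
    strictMonoOn_integral_of_pos hf fun x hx => hpos x (Or.inr hx)
  have hFanti : StrictAntiOn (fun r => ∫ s in (0 : ℝ)..r, f s) (Icc 0 s₀) :=
    strictAntiOn_integral_of_neg hf fun x hx => hneg x (Or.inl hx)
  have hFa := integral_lt_waveEnergy hf hv hode hc htop ha.2
  rw [waveEnergy_of_deriv_eq_zero hξ] at hFa
  have has₀ : v ξ < s₀ := by
    by_contra! h
    exact (hFmono ⟨h, ha1.le⟩ ⟨h.trans ha1.le, le_rfl⟩ ha1).not_gt hFa
  have hdd : 0 < deriv (deriv v) ξ := by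
    have hodeξ := hode ξ
    rw [hξ] at hodeξ
    linarith [hneg (v ξ) (Or.inl ⟨ha0, has₀⟩)]
  have hvd : Differentiable ℝ v := hv.differentiable two_ne_zero
  obtain ⟨z, hzξ, hz⟩ := exists_lt_apply_of_deriv_deriv_pos hvd hξ hdd
  obtain ⟨η, hηξ, hmax, hzη⟩ :=
    exists_isLocalMax_of_tendsto_atBot hvd.continuous hbot hzξ (ha0.trans hz) hz
  have hFb := antitone_waveEnergy hf hv hode hc.le hηξ.le
  rw [waveEnergy_of_deriv_eq_zero hξ, waveEnergy_of_deriv_eq_zero hmax.deriv_eq_zero] at hFb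
  have hab : v ξ < v η := hz.trans_le hzη
  rcases le_or_gt (v η) s₀ with hb | hb
  · exact (hFanti ⟨ha0.le, has₀.le⟩ ⟨ha0.le.trans hab.le, hb⟩ hab).not_ge hFb
  · have hb1 : v η ≤ 1 := (h01 η).2
    have hFb1 := hFmono.monotoneOn ⟨hb.le, hb1⟩ ⟨hb.le.trans hb1, le_rfl⟩ hb1
    exact (hFb.trans hFb1).not_gt hFa

theorem stmt_17 (f : ℝ → ℝ) (s₀ c : ℝ) (v : ℝ → ℝ) (ξ : ℝ)
    (hf : Continuous f) (hs₀ : 0 < s₀) (hs₀1 : s₀ < 1)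
    (hf0 : f 0 = 0) (hfs₀ : f s₀ = 0) (hf1 : f 1 = 0)
    (hneg : ∀ s, (s ∈ Ioo 0 s₀ ∨ s ∈ Ioi 1) → f s < 0)
    (hpos : ∀ s, (s ∈ Iio 0 ∨ s ∈ Ioo s₀ 1) → 0 < f s)
    (hF : ∀ r, 0 < r → r ≤ 1 → (∫ s in (0:ℝ)..r, f s) < 0)
    (hc : 0 < c)
    (hv : ContDiff ℝ 2 v)
    (hode : ∀ z, deriv (deriv v) z + c * deriv v z + f (v z) = 0)
    (h01 : ∀ z, 0 ≤ v z ∧ v z ≤ 1)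
    (hbot : Tendsto v atBot (nhds 0)) (htop : Tendsto v atTop (nhds 1))
    (hξ : deriv v ξ = 0) :
    v ξ = 0 ∨ v ξ = 1 :=
  stmt_17_general f s₀ c v ξ hf hneg hpos hc hv hode h01 hbot htop hξ
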